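/- arXiv:2402.05087 — 2 statements merged into one kernel-verified Lean document; each statement's English description precedes it below -/
import Mathlib

section
/- Let {U_i} be real-valued (or Banach-valued) random variables and set A_n = ∑_{i=2^n+1}^{2^{n+1}} U_i / 2^n and S_n = (1/n)∑_{i=1}^n U_i. If ‖S_n‖ → 0 almost surely, then ‖A_n‖ → 0 almost surely. Conversely (using Toeplitz's lemma) if ‖A_n‖ → 0 almost surely and additionally the maximal inequality over blocks holds (e.g., the U_i are symmetric and independent), then ‖S_n‖ → 0 almost surely. -/
open MeasureTheory ProbabilityTheory Filter

set_option linter.unusedSectionVars false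
set_option maxHeartbeats 1000000

section Aux

variable {Ω : Type*} [MeasurableSpace Ω] {μ : Measure Ω}
variable {E : Type*} [NormedAddCommGroup E] [NormedSpace ℝ E]
  [MeasurableSpace E] [BorelSpace E] [SecondCountableTopology E]

lemma two_pow_pos' (k : ℕ) : (0:ℝ) < 2 ^ k := by positivity

lemma hIcc_eq (b : ℕ) : Finset.Icc 1 b = Finset.Ioc 0 b := by
  rw [← Finset.Icc_add_one_left_eq_Ioc]; rfl

/-- partial sums in pi space -/
noncomputable def pS (N : ℕ) (j : ℕ) (x : Fin N → E) : E :=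
  ∑ i ∈ Finset.univ.filter (fun i : Fin N => (i : ℕ) < j), x i

lemma pS_measurable (N j : ℕ) : Measurable (pS (E := E) N j) :=
  Finset.measurable_sum _ fun i _ => measurable_pi_apply i

lemma pS_zero (N : ℕ) (x : Fin N → E) : pS N 0 x = 0 := by
  simp [pS]

lemma pS_top (N : ℕ) (x : Fin N → E) : pS N N x = ∑ i, x i := by
  rw [pS, Finset.filter_true_of_mem (fun i _ => i.isLt)]

/-- (A) joint law of finitely many of the `U i` is the product measure -/
lemma joint_law [IsProbabilityMeasure μ] {ι' : Type*} [Fintype ι'] (U : ℕ → Ω → E)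
    (hmeas : ∀ i, Measurable (U i))
    (hindep : iIndepFun U μ)
    (g : ι' → ℕ) (hg : Function.Injective g) :
    Measure.map (fun ω (i : ι') => U (g i) ω) μ
      = Measure.pi (fun i => Measure.map (U (g i)) μ) := by
  classical
  haveI : ∀ i, IsProbabilityMeasure (Measure.map (U (g i)) μ) :=
    fun i => Measure.isProbabilityMeasure_map (hmeas _).aemeasurable
  have hφ : Measurable (fun ω (i : ι') => U (g i) ω) :=
    measurable_pi_lambda _ fun i => hmeas _
  refine (Measure.pi_eq fun s hs => ?_).symm
  rw [Measure.map_apply hφ (MeasurableSet.univ_pi hs)]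
  have hpre : (fun ω (i : ι') => U (g i) ω) ⁻¹' (Set.univ.pi s)
      = ⋂ j ∈ Finset.univ.image g, (U j) ⁻¹'
          (if h : ∃ i, g i = j then s h.choose else Set.univ) := by
    ext ω
    simp only [Set.mem_preimage, Set.mem_univ_pi, Set.mem_iInter, Finset.mem_image,
      Finset.mem_univ, true_and]
    constructor
    · rintro h j ⟨i, rfl⟩
      have he : ∃ i', g i' = g i := ⟨i, rfl⟩
      rw [dif_pos he]
      have : he.choose = i := hg he.choose_spec
      rw [this]; exact h i
    · intro h i
      have := h (g i) ⟨i, rfl⟩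
      have he : ∃ i', g i' = g i := ⟨i, rfl⟩
      rw [dif_pos he] at this
      have h2 : he.choose = i := hg he.choose_spec
      rwa [h2] at this
  rw [hpre]
  rw [hindep.meas_biInter (S := Finset.univ.image g) (fun j hj => ?_)]
  · rw [Finset.prod_image (fun i _ i' _ h => hg h)]
    refine Finset.prod_congr rfl fun i _ => ?_
    have he : ∃ i', g i' = g i := ⟨i, rfl⟩
    rw [dif_pos he]
    have h2 : he.choose = i := hg he.choose_spec
    rw [h2, Measure.map_apply (hmeas _) (hs i)]
  · refine ⟨if h : ∃ i, g i = j then s h.choose else Set.univ, ?_, rfl⟩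
    split
    · exact hs _
    · exact MeasurableSet.univ

/-- (C) Levy's maximal inequality on a product space -/
lemma levy_pi {N : ℕ} (ν : Fin N → Measure E) [∀ i, IsProbabilityMeasure (ν i)]
    (hsym : ∀ i, Measure.map Neg.neg (ν i) = ν i) {t : ℝ} (ht : 0 ≤ t) :
    Measure.pi ν {x | ∃ j ∈ Finset.Icc 1 N, t < ‖pS N j x‖}
      ≤ 2 * Measure.pi ν {x | t < ‖pS N N x‖} := by
  classical
  set π := Measure.pi ν with hπ
  set A : ℕ → Set (Fin N → E) :=
    fun j => {x | t < ‖pS N j x‖ ∧ ∀ i < j, ‖pS N i x‖ ≤ t} with hA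
  set B : Set (Fin N → E) := {x | t < ‖pS N N x‖} with hB
  have hBmeas : MeasurableSet B :=
    measurableSet_lt measurable_const (pS_measurable N N).norm
  have hAmeas : ∀ j, MeasurableSet (A j) := by
    intro j
    have hAj : A j = {x | t < ‖pS N j x‖} ∩ ⋂ (i : ℕ) (_ : i < j), {x | ‖pS N i x‖ ≤ t} := by
      ext x
      simp only [hA, Set.mem_setOf_eq, Set.mem_inter_iff, Set.mem_iInter]
    rw [hAj]
    exact (measurableSet_lt measurable_const (pS_measurable N j).norm).inter
      (MeasurableSet.iInter fun i => MeasurableSet.iInter fun _ =>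
        measurableSet_le (pS_measurable N i).norm measurable_const)
  -- union identity
  have hunion : {x | ∃ j ∈ Finset.Icc 1 N, t < ‖pS N j x‖} = ⋃ j ∈ Finset.Icc 1 N, A j := by
    ext x
    simp only [Set.mem_setOf_eq, Set.mem_iUnion, Finset.mem_Icc]
    constructor
    · rintro ⟨j, ⟨hj1, hjN⟩, hjt⟩
      have hex : ∃ k, t < ‖pS N k x‖ := ⟨j, hjt⟩
      refine ⟨Nat.find hex, ⟨?_, ?_⟩, Nat.find_spec hex, fun i hi => not_lt.1 (Nat.find_min hex hi)⟩
      · rcases Nat.eq_zero_or_pos (Nat.find hex) with h0 | h0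
        · exfalso
          have := Nat.find_spec hex
          rw [h0, pS_zero] at this
          simp at this; linarith
        · exact h0
      · exact le_trans (Nat.find_min' hex hjt) hjN
    · rintro ⟨j, hj, hjt, _⟩
      exact ⟨j, hj, hjt⟩
  -- disjointness
  have hdisj0 : ∀ j j', j < j' → Disjoint (A j) (A j') := by
    intro j j' h
    refine Set.disjoint_left.2 fun x hx hx' => ?_
    exact absurd hx.1 (not_lt.2 (hx'.2 j h))
  have hdisj : (Finset.Icc 1 N : Set ℕ).PairwiseDisjoint A := by
    intro j _ j' _ hne
    rcases hne.lt_or_gt with h | h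
    · exact hdisj0 j j' h
    · exact (hdisj0 j' j h).symm
  -- reflection
  have key : ∀ j, π (A j) ≤ 2 * π (A j ∩ B) := by
    intro j
    set R : (Fin N → E) → (Fin N → E) :=
      fun x i => if (i : ℕ) < j then x i else -x i with hR
    have hRmp : MeasurePreserving R π π := by
      have : R = fun (x : Fin N → E) (i : Fin N) =>
          (if (i : ℕ) < j then (id : E → E) else Neg.neg) (x i) := by
        ext x i; by_cases h : (i : ℕ) < j <;> simp [hR, h]
      rw [this]
      exact measurePreserving_pi ν ν fun i => by
        by_cases h : (i : ℕ) < j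
        · simpa [h] using MeasurePreserving.id (ν i)
        · simpa [h] using (⟨measurable_neg, hsym i⟩ : MeasurePreserving (Neg.neg) (ν i) (ν i))
    have hpS_R : ∀ (i : ℕ), i ≤ j → ∀ x, pS N i (R x) = pS N i x := by
      intro i hi x
      refine Finset.sum_congr rfl fun k hk => ?_
      rw [Finset.mem_filter] at hk
      have : (k : ℕ) < j := lt_of_lt_of_le hk.2 hi
      simp [hR, this]
    have hpS_RN : ∀ x, pS N N (R x) = pS N j x - (pS N N x - pS N j x) := by
      intro x
      have h1 : ∀ x : Fin N → E, pS N N x =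
          (∑ i ∈ Finset.univ.filter (fun i : Fin N => (i : ℕ) < j), x i)
          + ∑ i ∈ Finset.univ.filter (fun i : Fin N => ¬ (i : ℕ) < j), x i := by
        intro x; rw [pS_top, Finset.sum_filter_add_sum_filter_not]
      rw [h1 (R x), h1 x]
      have h2 : ∀ k ∈ Finset.univ.filter (fun i : Fin N => (i : ℕ) < j),
          R x k = x k := fun k hk => by
        rw [Finset.mem_filter] at hk; simp [hR, hk.2]
      have h3 : ∀ k ∈ Finset.univ.filter (fun i : Fin N => ¬ (i : ℕ) < j),
          R x k = -x k := fun k hk => by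
        rw [Finset.mem_filter] at hk; simp [hR, hk.2]
      rw [Finset.sum_congr rfl h2, Finset.sum_congr rfl h3, Finset.sum_neg_distrib]
      have : pS N j (R x) = pS N j x := hpS_R j le_rfl x
      rw [pS] at this ⊢
      abel
    -- A j invariant and reflection identity
    have hrefl : R ⁻¹' (A j ∩ B) = A j ∩ {x | t < ‖pS N j x - (pS N N x - pS N j x)‖} := by
      ext x
      simp only [Set.mem_preimage, Set.mem_inter_iff, hA, hB, Set.mem_setOf_eq]
      have e1 : pS N j (R x) = pS N j x := hpS_R j le_rfl x
      have e2 : ∀ i < j, pS N i (R x) = pS N i x := fun i hi => hpS_R i hi.le x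
      constructor
      · rintro ⟨⟨h1, h2⟩, h3⟩
        exact ⟨⟨by rwa [e1] at h1, fun i hi => by rw [← e2 i hi]; exact h2 i hi⟩,
          by rwa [hpS_RN x] at h3⟩
      · rintro ⟨⟨h1, h2⟩, h3⟩
        exact ⟨⟨by rwa [e1], fun i hi => by rw [e2 i hi]; exact h2 i hi⟩,
          by rwa [hpS_RN x]⟩
    have hsub : A j ⊆ (A j ∩ B) ∪ (A j ∩ {x | t < ‖pS N j x - (pS N N x - pS N j x)‖}) := by
      intro x hx
      by_cases hxB : x ∈ B
      · exact Or.inl ⟨hx, hxB⟩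
      · refine Or.inr ⟨hx, ?_⟩
        have h1 : t < ‖pS N j x‖ := hx.1
        have h2 : ‖pS N N x‖ ≤ t := not_lt.1 hxB
        have : ‖pS N j x‖ ≤ (‖pS N N x‖ + ‖pS N j x - (pS N N x - pS N j x)‖) / 2 := by
          have : (2 : ℝ) • pS N j x = pS N N x + (pS N j x - (pS N N x - pS N j x)) := by
            rw [two_smul]; abel
          have hn := norm_add_le (pS N N x) (pS N j x - (pS N N x - pS N j x))
          rw [← this, norm_smul] at hn
          simp only [Real.norm_ofNat] at hn
          linarith
        simp only [Set.mem_setOf_eq]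
        nlinarith [norm_nonneg (pS N N x), norm_nonneg (pS N j x - (pS N N x - pS N j x))]
    have hmeas2 : MeasurableSet {x : Fin N → E | t < ‖pS N j x - (pS N N x - pS N j x)‖} :=
      measurableSet_lt measurable_const
        (((pS_measurable N j).sub ((pS_measurable N N).sub (pS_measurable N j))).norm)
    calc π (A j) ≤ π ((A j ∩ B) ∪ (A j ∩ {x | t < ‖pS N j x - (pS N N x - pS N j x)‖})) :=
          measure_mono hsub
      _ ≤ π (A j ∩ B) + π (A j ∩ {x | t < ‖pS N j x - (pS N N x - pS N j x)‖}) :=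
          measure_union_le _ _
      _ = π (A j ∩ B) + π (R ⁻¹' (A j ∩ B)) := by rw [hrefl]
      _ = π (A j ∩ B) + π (A j ∩ B) := by
          rw [hRmp.measure_preimage ((hAmeas j).inter hBmeas).nullMeasurableSet]
      _ = 2 * π (A j ∩ B) := by ring
  -- assemble
  rw [hunion, measure_biUnion_finset hdisj (fun j _ => hAmeas j)]
  calc ∑ j ∈ Finset.Icc 1 N, π (A j) ≤ ∑ j ∈ Finset.Icc 1 N, 2 * π (A j ∩ B) :=
        Finset.sum_le_sum fun j _ => key j
    _ = 2 * ∑ j ∈ Finset.Icc 1 N, π (A j ∩ B) := by rw [Finset.mul_sum]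
    _ = 2 * π (⋃ j ∈ Finset.Icc 1 N, (A j ∩ B)) := by
        rw [measure_biUnion_finset (hdisj.mono_on ?_) (fun j _ => (hAmeas j).inter hBmeas)]
        · intro j _; exact Set.inter_subset_left
    _ ≤ 2 * π B := by
        gcongr
        exact Set.iUnion₂_subset fun j _ => Set.inter_subset_right

/-- (D) Levy's inequality transferred to Ω -/
lemma levy_omega [IsProbabilityMeasure μ] (U : ℕ → Ω → E)
    (hmeas : ∀ i, Measurable (U i))
    (hindep : iIndepFun U μ)
    (hsymm : ∀ i, Measure.map (U i) μ = Measure.map (fun ω => -U i ω) μ)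
    (a N : ℕ) {t : ℝ} (ht : 0 ≤ t) :
    μ {ω | ∃ j ∈ Finset.Icc 1 N, t < ‖∑ i ∈ Finset.Ioc a (a + j), U i ω‖}
      ≤ 2 * μ {ω | t < ‖∑ i ∈ Finset.Ioc a (a + N), U i ω‖} := by
  classical
  set g : Fin N → ℕ := fun i => a + 1 + (i : ℕ) with hg
  have hginj : Function.Injective g := by
    intro i i' h
    simp only [hg] at h
    exact Fin.ext (by omega)
  set φ : Ω → (Fin N → E) := fun ω i => U (g i) ω with hφ
  have hφmeas : Measurable φ := measurable_pi_lambda _ fun i => hmeas _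
  set ν : Fin N → Measure E := fun i => Measure.map (U (g i)) μ with hν
  haveI : ∀ i, IsProbabilityMeasure (ν i) :=
    fun i => Measure.isProbabilityMeasure_map (hmeas _).aemeasurable
  have hmap : Measure.map φ μ = Measure.pi ν := joint_law U hmeas hindep g hginj
  have hsym : ∀ i, Measure.map Neg.neg (ν i) = ν i := by
    intro i
    rw [hν]
    rw [Measure.map_map measurable_neg (hmeas _)]
    have : (Neg.neg ∘ U (g i)) = fun ω => -U (g i) ω := rfl
    rw [this, ← hsymm]
  -- sum identity
  have hsum : ∀ (ω : Ω) (j : ℕ), j ≤ N →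
      ∑ i ∈ Finset.Ioc a (a + j), U i ω = pS N j (φ ω) := by
    intro ω j hj
    rw [pS]
    refine Finset.sum_bij' (i := fun m (hm : m ∈ Finset.Ioc a (a + j)) => (⟨m - (a + 1), by
        simp only [Finset.mem_Ioc] at hm; omega⟩ : Fin N))
      (j := fun i _ => a + 1 + (i : ℕ)) ?_ ?_ ?_ ?_ ?_
    · intro m hm
      simp only [Finset.mem_Ioc] at hm
      simp only [Finset.mem_filter, Finset.mem_univ, true_and]
      omega
    · intro i hi
      simp only [Finset.mem_filter, Finset.mem_univ, true_and] at hi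
      simp only [Finset.mem_Ioc]
      omega
    · intro m hm
      simp only [Finset.mem_Ioc] at hm
      dsimp only
      omega
    · intro i hi
      refine Fin.ext ?_
      dsimp only
      omega
    · intro m hm
      simp only [Finset.mem_Ioc] at hm
      have hgm : g ⟨m - (a + 1), by omega⟩ = m := by
        simp only [hg]; omega
      exact (congrArg (fun n => U n ω) hgm).symm
  -- measurable sets in pi space
  have hS1 : MeasurableSet {x : Fin N → E | ∃ j ∈ Finset.Icc 1 N, t < ‖pS N j x‖} := by
    have : {x : Fin N → E | ∃ j ∈ Finset.Icc 1 N, t < ‖pS N j x‖}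
        = ⋃ j ∈ Finset.Icc 1 N, {x | t < ‖pS N j x‖} := by
      ext x; simp
    rw [this]
    exact (Finset.Icc 1 N).measurableSet_biUnion fun j _ =>
      measurableSet_lt measurable_const (pS_measurable N j).norm
  have hS2 : MeasurableSet {x : Fin N → E | t < ‖pS N N x‖} :=
    measurableSet_lt measurable_const (pS_measurable N N).norm
  have he1 : {ω | ∃ j ∈ Finset.Icc 1 N, t < ‖∑ i ∈ Finset.Ioc a (a + j), U i ω‖}
      = φ ⁻¹' {x | ∃ j ∈ Finset.Icc 1 N, t < ‖pS N j x‖} := by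
    ext ω
    simp only [Set.mem_setOf_eq, Set.mem_preimage]
    constructor
    · rintro ⟨j, hj, hjt⟩
      exact ⟨j, hj, by rwa [← hsum ω j (Finset.mem_Icc.1 hj).2]⟩
    · rintro ⟨j, hj, hjt⟩
      exact ⟨j, hj, by rwa [hsum ω j (Finset.mem_Icc.1 hj).2]⟩
  have he2 : {ω | t < ‖∑ i ∈ Finset.Ioc a (a + N), U i ω‖}
      = φ ⁻¹' {x | t < ‖pS N N x‖} := by
    ext ω
    simp only [Set.mem_setOf_eq, Set.mem_preimage, ← hsum ω N le_rfl]
  rw [he1, he2, ← Measure.map_apply hφmeas hS1, ← Measure.map_apply hφmeas hS2, hmap]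
  exact levy_pi ν hsym ht

/-- (E) events measurable w.r.t. disjoint blocks are independent -/
lemma block_iIndepSet [IsProbabilityMeasure μ] (U : ℕ → Ω → E)
    (hmeas : ∀ i, Measurable (U i))
    (hindep : iIndepFun U μ)
    (T : ℕ → Finset ℕ) (hT : Pairwise (Function.onFun Disjoint T))
    (C : ℕ → Set Ω)
    (hC : ∀ k, MeasurableSet[⨆ i ∈ (T k : Set ℕ),
      MeasurableSpace.comap (U i) inferInstance] (C k)) :
    iIndepSet C μ := by
  classical
  set m0 : ℕ → MeasurableSpace Ω :=
    fun i => MeasurableSpace.comap (U i) inferInstance with hm0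
  set π₀ : ℕ → Set (Set Ω) := fun i => {s | MeasurableSet[m0 i] s} with hπ₀
  have hπ₀pi : ∀ i, IsPiSystem (π₀ i) :=
    fun i => @MeasurableSpace.isPiSystem_measurableSet Ω (m0 i)
  have hind0 : iIndepSets π₀ μ := ((iIndepFun_iff_iIndep _ _ _).1 hindep).iIndepSets'
  -- merging elements of piiUnionInter over disjoint index sets
  have hmerge : ∀ (S1 S2 : Set ℕ), Disjoint S1 S2 → ∀ s1 ∈ piiUnionInter π₀ S1,
      ∀ s2 ∈ piiUnionInter π₀ S2, s1 ∩ s2 ∈ piiUnionInter π₀ (S1 ∪ S2) := by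
    rintro S1 S2 hS _ ⟨t1, ht1S, f1, hf1, rfl⟩ _ ⟨t2, ht2S, f2, hf2, rfl⟩
    have ht12 : ∀ x, x ∈ t2 → x ∉ t1 := fun x hx2 hx1 =>
      Set.disjoint_left.1 hS (ht1S hx1) (ht2S hx2)
    refine ⟨t1 ∪ t2, ?_, fun i => if i ∈ t1 then f1 i else f2 i, ?_, ?_⟩
    · rw [Finset.coe_union]
      exact Set.union_subset_union ht1S ht2S
    · intro x hx
      rcases Finset.mem_union.1 hx with h | h
      · simpa [h] using hf1 x h
      · have : x ∉ t1 := ht12 x h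
        simpa [this] using hf2 x h
    · ext ω
      simp only [Set.mem_inter_iff, Set.mem_iInter, Finset.mem_union]
      constructor
      · rintro ⟨h1, h2⟩ x hx
        rcases hx with h | h
        · simpa [h] using h1 x h
        · have hn : x ∉ t1 := ht12 x h
          simpa [hn] using h2 x h
      · intro h
        constructor
        · intro x hx
          have := h x (Or.inl hx)
          simpa [hx] using this
        · intro x hx
          have hn : x ∉ t1 := ht12 x hx
          have := h x (Or.inr hx)
          simpa [hn] using this
  -- main claim by induction
  have claim : ∀ s : Finset ℕ, ∀ f : ℕ → Set Ω,
      (∀ k ∈ s, f k ∈ piiUnionInter π₀ ↑(T k)) →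
      μ (⋂ k ∈ s, f k) = ∏ k ∈ s, μ (f k) ∧
        (⋂ k ∈ s, f k) ∈ piiUnionInter π₀ (⋃ k ∈ (s : Set ℕ), (T k : Set ℕ)) := by
    intro s
    induction s using Finset.induction_on with
    | empty =>
      intro f _
      refine ⟨by simp, ?_⟩
      simp only [Finset.notMem_empty, Set.iInter_of_empty, Set.iInter_univ]
      exact ⟨∅, by simp, fun _ => Set.univ, by simp, by simp⟩
    | @insert a s' ha ih =>
      intro f hf
      have h1 := ih f (fun k hk => hf k (Finset.mem_insert_of_mem hk))
      have hdisjset : Disjoint (⋃ k ∈ (s' : Set ℕ), (T k : Set ℕ)) (T a : Set ℕ) := by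
        refine Set.disjoint_left.2 fun x hx hxa => ?_
        rcases Set.mem_iUnion₂.1 hx with ⟨k, hk, hxk⟩
        have hka : k ≠ a := fun h => ha (h ▸ hk)
        exact Set.disjoint_left.1 (Finset.disjoint_coe.2 (hT hka)) hxk hxa
      have hIndepS : IndepSets (piiUnionInter π₀ (⋃ k ∈ (s' : Set ℕ), (T k : Set ℕ)))
          (piiUnionInter π₀ (T a : Set ℕ)) μ :=
        indepSets_piiUnionInter_of_disjoint hind0 hdisjset
      have hfa : f a ∈ piiUnionInter π₀ (T a : Set ℕ) := hf a (Finset.mem_insert_self a s')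
      have hbee : (⋂ k ∈ insert a s', f k) = (⋂ k ∈ s', f k) ∩ f a := by
        rw [Finset.set_biInter_insert, Set.inter_comm]
      constructor
      · rw [hbee, (IndepSets_iff _ _ _).1 hIndepS _ _ h1.2 hfa, h1.1,
          Finset.prod_insert ha, mul_comm]
      · rw [hbee]
        have := hmerge _ _ hdisjset _ h1.2 _ hfa
        have hU : (⋃ k ∈ (s' : Set ℕ), (T k : Set ℕ)) ∪ (T a : Set ℕ)
            = ⋃ k ∈ ((insert a s' : Finset ℕ) : Set ℕ), (T k : Set ℕ) := by
          rw [Finset.coe_insert, Set.biUnion_insert, Set.union_comm]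
        rwa [hU] at this
  -- independence of the sup sigma-algebras
  have h_ind : iIndepSets (fun k => piiUnionInter π₀ ((T k : Set ℕ))) μ := by
    rw [iIndepSets_iff]
    intro s f hf
    exact (claim s f hf).1
  have hiIndep : iIndep (fun k => ⨆ i ∈ (T k : Set ℕ), m0 i) μ :=
    h_ind.iIndep (fun k => iSup₂_le fun i _ => (hmeas i).comap_le)
      (fun k => piiUnionInter π₀ ((T k : Set ℕ)))
      (fun k => isPiSystem_piiUnionInter π₀ hπ₀pi _)
      (fun k => (generateFrom_piiUnionInter_measurableSet m0 _).symm)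
  -- conclude
  rw [iIndepSet_iff_iIndep]
  rw [iIndep_iff]
  intro s f hf
  refine (iIndep_iff _ _).1 hiIndep s (fun k hk => ?_)
  have hle : MeasurableSpace.generateFrom {C k} ≤ ⨆ i ∈ (T k : Set ℕ), m0 i := by
    refine MeasurableSpace.generateFrom_le fun t ht => ?_
    rw [Set.mem_singleton_iff] at ht
    exact ht ▸ hC k
  exact hle _ (hf k hk)

/-- forward deterministic direction -/
lemma forward_det (f : ℕ → E)
    (h : Tendsto (fun n : ℕ => (n : ℝ)⁻¹ • ∑ i ∈ Finset.Icc 1 n, f i) atTop (nhds 0)) :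
    Tendsto (fun k : ℕ => ((2:ℝ) ^ k)⁻¹ • ∑ i ∈ Finset.Ioc (2 ^ k) (2 ^ (k + 1)), f i)
      atTop (nhds 0) := by
  have hpow : Tendsto (fun k : ℕ => (2:ℕ) ^ k) atTop atTop :=
    tendsto_pow_atTop_atTop_of_one_lt one_lt_two
  have h1 : Tendsto (fun k : ℕ => (((2:ℕ) ^ k : ℕ) : ℝ)⁻¹ • ∑ i ∈ Finset.Icc 1 (2 ^ k), f i)
      atTop (nhds 0) := h.comp hpow
  have h2 : Tendsto (fun k : ℕ => (((2:ℕ) ^ (k+1) : ℕ) : ℝ)⁻¹ • ∑ i ∈ Finset.Icc 1 (2 ^ (k+1)), f i)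
      atTop (nhds 0) := h.comp (hpow.comp (tendsto_add_atTop_nat 1))
  have key : ∀ k : ℕ, ((2:ℝ) ^ k)⁻¹ • ∑ i ∈ Finset.Ioc (2 ^ k) (2 ^ (k + 1)), f i
      = (2:ℝ) • ((((2:ℕ) ^ (k+1) : ℕ) : ℝ)⁻¹ • ∑ i ∈ Finset.Icc 1 (2 ^ (k+1)), f i)
        - (((2:ℕ) ^ k : ℕ) : ℝ)⁻¹ • ∑ i ∈ Finset.Icc 1 (2 ^ k), f i := by
    intro k
    have hsplit : (∑ i ∈ Finset.Icc 1 (2 ^ k), f i) + ∑ i ∈ Finset.Ioc (2 ^ k) (2 ^ (k+1)), f i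
        = ∑ i ∈ Finset.Icc 1 (2 ^ (k+1)), f i := by
      rw [hIcc_eq, hIcc_eq]
      exact Finset.sum_Ioc_consecutive f (Nat.zero_le _)
        (Nat.pow_le_pow_right (by norm_num) (Nat.le_succ k))
    have hc : (((2:ℕ) ^ (k+1) : ℕ) : ℝ) = 2 * 2 ^ k := by push_cast [pow_succ]; ring
    have hc2 : (((2:ℕ) ^ k : ℕ) : ℝ) = 2 ^ k := by push_cast; ring
    rw [← hsplit, hc, hc2]
    match_scalars <;> field_simp <;> ring
  have := ((h2.const_smul (2:ℝ)).sub h1)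
  rw [smul_zero, sub_zero] at this
  exact Tendsto.congr (fun k => (key k).symm) this

/-- Toeplitz-type deterministic lemma -/
lemma toeplitz_det (f : ℕ → E)
    (h : Tendsto (fun k : ℕ => ((2:ℝ) ^ k)⁻¹ • ∑ i ∈ Finset.Ioc (2 ^ k) (2 ^ (k + 1)), f i)
      atTop (nhds 0)) :
    Tendsto (fun k : ℕ => ((2:ℝ) ^ k)⁻¹ • ∑ i ∈ Finset.Icc 1 (2 ^ k), f i) atTop (nhds 0) := by
  set D : ℕ → E := fun k => ∑ i ∈ Finset.Ioc (2 ^ k) (2 ^ (k+1)), f i with hD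
  set G : ℕ → E := fun k => ∑ i ∈ Finset.Icc 1 (2 ^ k), f i with hG
  have htel : ∀ k, G k = G 0 + ∑ j ∈ Finset.range k, D j := by
    intro k
    have h1 : ∀ j, G j + D j = G (j + 1) := by
      intro j
      rw [hG, hD]
      simp only
      rw [hIcc_eq, hIcc_eq]
      exact Finset.sum_Ioc_consecutive f (Nat.zero_le _)
        (Nat.pow_le_pow_right (by norm_num) (Nat.le_succ j))
    have h2 : ∑ j ∈ Finset.range k, (G (j+1) - G j) = G k - G 0 :=
      Finset.sum_range_sub (fun j => G j) k
    have h3 : ∀ j, D j = G (j+1) - G j := fun j => by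
      rw [← h1 j]; abel
    calc G k = G 0 + (G k - G 0) := by abel
      _ = G 0 + ∑ j ∈ Finset.range k, (G (j+1) - G j) := by rw [h2]
      _ = G 0 + ∑ j ∈ Finset.range k, D j := by
          congr 1; exact (Finset.sum_congr rfl fun j _ => (h3 j).symm)
  -- D is little-o of 2^k
  have hDo : (fun k => D k) =o[atTop] (fun k => (2:ℝ) ^ k) := by
    rw [Asymptotics.isLittleO_iff]
    intro c hc
    have := (NormedAddCommGroup.tendsto_nhds_zero.1 h) c hc
    filter_upwards [this] with k hk
    rw [norm_smul, norm_inv, norm_pow, Real.norm_ofNat] at hk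
    have hpos := two_pow_pos' k
    rw [Real.norm_of_nonneg (le_of_lt hpos)]
    rw [inv_mul_lt_iff₀ hpos] at hk
    nlinarith [hk]
  have hgsum : Tendsto (fun k : ℕ => ∑ i ∈ Finset.range k, (2:ℝ)^i) atTop atTop := by
    apply tendsto_atTop_mono (fun k => ?_) tendsto_natCast_atTop_atTop
    calc (k:ℝ) = ∑ i ∈ Finset.range k, 1 := by simp
      _ ≤ ∑ i ∈ Finset.range k, (2:ℝ)^i :=
          Finset.sum_le_sum fun i _ => one_le_pow₀ one_le_two
  have hsumo := hDo.sum_range (fun i => le_of_lt (two_pow_pos' i)) hgsum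
  -- conclude
  have hterm1 : Tendsto (fun k : ℕ => ((2:ℝ)^k)⁻¹ • G 0) atTop (nhds 0) := by
    have : Tendsto (fun k : ℕ => ((2:ℝ)⁻¹)^k) atTop (nhds 0) :=
      tendsto_pow_atTop_nhds_zero_of_lt_one (by norm_num) (by norm_num)
    simp_rw [← inv_pow]
    simpa using this.smul_const (G 0)
  have hterm2 : Tendsto (fun k : ℕ => ((2:ℝ)^k)⁻¹ • ∑ j ∈ Finset.range k, D j)
      atTop (nhds 0) := by
    rw [NormedAddCommGroup.tendsto_nhds_zero]
    intro ε hε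
    have := Asymptotics.isLittleO_iff.1 hsumo (half_pos hε)
    filter_upwards [this] with k hk
    have hpos := two_pow_pos' k
    have hbound : ‖∑ i ∈ Finset.range k, (2:ℝ)^i‖ ≤ 2^k := by
      rw [Real.norm_of_nonneg (Finset.sum_nonneg fun i _ => le_of_lt (two_pow_pos' i))]
      calc ∑ i ∈ Finset.range k, (2:ℝ)^i = 2^k - 1 := by
            rw [geom_sum_eq (by norm_num)]; norm_num
        _ ≤ 2^k := by linarith
    rw [norm_smul, norm_inv, norm_pow, Real.norm_ofNat]
    calc ((2:ℝ)^k)⁻¹ * ‖∑ j ∈ Finset.range k, D j‖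
        ≤ ((2:ℝ)^k)⁻¹ * (ε/2 * 2^k) := by
          gcongr
          exact le_trans hk (by nlinarith [hbound, half_pos hε])
      _ = ε/2 := by field_simp
      _ < ε := by linarith
  have := hterm1.add hterm2
  rw [add_zero] at this
  apply Tendsto.congr _ this
  intro k
  show _ = ((2:ℝ)^k)⁻¹ • G k
  rw [htel k, smul_add]

/-- final deterministic assembly -/
lemma assemble_det (f : ℕ → E)
    (h1 : Tendsto (fun k : ℕ => ((2:ℝ) ^ k)⁻¹ • ∑ i ∈ Finset.Icc 1 (2 ^ k), f i)
      atTop (nhds 0))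
    (h2 : ∀ m : ℕ, ∀ᶠ k : ℕ in atTop, ∀ j ∈ Finset.Icc 1 (2 ^ k),
      ‖∑ i ∈ Finset.Ioc (2 ^ k) (2 ^ k + j), f i‖ ≤ (1 / (m + 1) : ℝ) * 2 ^ k) :
    Tendsto (fun n : ℕ => (n : ℝ)⁻¹ • ∑ i ∈ Finset.Icc 1 n, f i) atTop (nhds 0) := by
  rw [NormedAddCommGroup.tendsto_nhds_zero]
  intro ε hε
  obtain ⟨m, hm⟩ : ∃ m : ℕ, (1 / (m + 1) : ℝ) < ε / 2 := exists_nat_one_div_lt (half_pos hε)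
  have h1' := (NormedAddCommGroup.tendsto_nhds_zero.1 h1) (ε/2) (half_pos hε)
  obtain ⟨K1, hK1⟩ := eventually_atTop.1 h1'
  obtain ⟨K2, hK2⟩ := eventually_atTop.1 (h2 m)
  set K := max K1 K2 with hK
  rw [eventually_atTop]
  refine ⟨2 ^ K + 1, fun n hn => ?_⟩
  have hn1 : 1 ≤ n - 1 := by
    have : 1 ≤ 2 ^ K := Nat.one_le_two_pow
    omega
  have hne : n - 1 ≠ 0 := by omega
  set k := Nat.log 2 (n - 1) with hkdef
  have hk1 : 2 ^ k ≤ n - 1 := Nat.pow_log_le_self 2 hne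
  have hk2 : n - 1 < 2 ^ (k + 1) := Nat.lt_pow_succ_log_self one_lt_two _
  have hkK : K ≤ k := by
    have : 2 ^ K ≤ n - 1 := by omega
    exact (Nat.le_log_iff_pow_le one_lt_two hne).2 this
  have hkn : 2 ^ k < n := by omega
  have hnk : n ≤ 2 ^ (k + 1) := by omega
  set j := n - 2 ^ k with hj
  have hj1 : 1 ≤ j := by omega
  have hj2 : j ≤ 2 ^ k := by
    have : 2 ^ (k + 1) = 2 ^ k + 2 ^ k := by ring
    omega
  have hnkj : n = 2 ^ k + j := by omega
  have hsplit : ∑ i ∈ Finset.Icc 1 n, f i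
      = (∑ i ∈ Finset.Icc 1 (2 ^ k), f i) + ∑ i ∈ Finset.Ioc (2 ^ k) (2 ^ k + j), f i := by
    rw [hIcc_eq, hIcc_eq, ← hnkj]
    exact (Finset.sum_Ioc_consecutive f (Nat.zero_le _) (le_of_lt hkn)).symm
  have hb1 : ‖∑ i ∈ Finset.Icc 1 (2 ^ k), f i‖ < ε / 2 * 2 ^ k := by
    have := hK1 k (le_trans (le_max_left _ _) hkK)
    rw [norm_smul, norm_inv, norm_pow, Real.norm_ofNat] at this
    have hpos : (0:ℝ) < 2 ^ k := by positivity
    rw [inv_mul_lt_iff₀ hpos] at this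
    nlinarith [this]
  have hb2 : ‖∑ i ∈ Finset.Ioc (2 ^ k) (2 ^ k + j), f i‖ ≤ (1 / (m + 1) : ℝ) * 2 ^ k :=
    hK2 k (le_trans (le_max_right _ _) hkK) j (Finset.mem_Icc.2 ⟨hj1, hj2⟩)
  have hpos : (0:ℝ) < 2 ^ k := by positivity
  have hcast : (2:ℝ) ^ k ≤ (n:ℝ) := by
    exact_mod_cast le_of_lt (by exact_mod_cast hkn : ((2 ^ k : ℕ) : ℝ) < (n : ℝ))
  have hnorm : ‖∑ i ∈ Finset.Icc 1 n, f i‖ < ε * 2 ^ k := by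
    rw [hsplit]
    calc ‖(∑ i ∈ Finset.Icc 1 (2 ^ k), f i) + ∑ i ∈ Finset.Ioc (2 ^ k) (2 ^ k + j), f i‖
        ≤ ‖∑ i ∈ Finset.Icc 1 (2 ^ k), f i‖ + ‖∑ i ∈ Finset.Ioc (2 ^ k) (2 ^ k + j), f i‖ :=
          norm_add_le _ _
      _ < ε / 2 * 2 ^ k + (1 / (m + 1) : ℝ) * 2 ^ k := by linarith
      _ ≤ ε / 2 * 2 ^ k + ε / 2 * 2 ^ k := by nlinarith [hm, hpos]
      _ = ε * 2 ^ k := by ring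
  rw [norm_smul, norm_inv, Real.norm_natCast]
  have hnpos' : (0:ℝ) < (n:ℕ) := by
    have : 0 < n := by omega
    exact_mod_cast this
  rw [inv_mul_lt_iff₀ hnpos']
  calc ‖∑ i ∈ Finset.Icc 1 n, f i‖ < ε * 2 ^ k := hnorm
    _ ≤ ε * n := by nlinarith [hcast, hε]
    _ = (n:ℝ) * ε := by ring

end Aux

theorem stmt_7 {Ω : Type*} [MeasurableSpace Ω] (μ : Measure Ω) [IsProbabilityMeasure μ]
    {E : Type*} [NormedAddCommGroup E] [NormedSpace ℝ E] [CompleteSpace E]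
    [MeasurableSpace E] [BorelSpace E] [SecondCountableTopology E]
    (U : ℕ → Ω → E)
    (hmeas : ∀ i, Measurable (U i))
    (hindep : iIndepFun U μ)
    (hsymm : ∀ i, Measure.map (U i) μ = Measure.map (fun ω => -U i ω) μ) :
    (∀ᵐ ω ∂μ, Tendsto
        (fun n : ℕ => ‖(n : ℝ)⁻¹ • ∑ i ∈ Finset.Icc 1 n, U i ω‖) atTop (nhds 0)) ↔
      (∀ᵐ ω ∂μ, Tendsto
        (fun n : ℕ => ‖((2 : ℝ) ^ n)⁻¹ • ∑ i ∈ Finset.Ioc (2 ^ n) (2 ^ (n + 1)), U i ω‖)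
        atTop (nhds 0)) := by
  constructor
  · -- forward direction
    intro h
    filter_upwards [h] with ω hω
    exact tendsto_zero_iff_norm_tendsto_zero.1
      (forward_det (fun i => U i ω) (tendsto_zero_iff_norm_tendsto_zero.2 hω))
  · -- converse direction
    intro h
    classical
    set C : ℕ → ℕ → Set Ω := fun m k =>
      {ω | (1/(m+1) : ℝ) * 2^k < ‖∑ i ∈ Finset.Ioc (2^k) (2^(k+1)), U i ω‖} with hCdef
    set Bad : ℕ → ℕ → Set Ω := fun m k =>
      {ω | ∃ j ∈ Finset.Icc 1 (2^k),
        (1/(m+1) : ℝ) * 2^k < ‖∑ i ∈ Finset.Ioc (2^k) (2^k + j), U i ω‖} with hBaddef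
    have hsummeas : ∀ (a b : ℕ), Measurable (fun ω => ∑ i ∈ Finset.Ioc a b, U i ω) :=
      fun a b => Finset.measurable_sum _ (fun i _ => hmeas i)
    have hCmeas : ∀ m k, MeasurableSet (C m k) := fun m k =>
      measurableSet_lt measurable_const (hsummeas _ _).norm
    -- blocks are pairwise disjoint
    have hTdisj : Pairwise (Function.onFun Disjoint
        (fun k => Finset.Ioc (2^k) (2^(k+1)))) := by
      have key : ∀ k k', k < k' →
          Disjoint (Finset.Ioc (2^k) (2^(k+1))) (Finset.Ioc (2^k') (2^(k'+1))) := by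
        intro k k' hkk'
        refine Finset.disjoint_left.2 fun x hx hx' => ?_
        rw [Finset.mem_Ioc] at hx hx'
        have : (2:ℕ)^(k+1) ≤ 2^k' := Nat.pow_le_pow_right (by norm_num) hkk'
        omega
      intro k k' hne
      rcases hne.lt_or_gt with hlt | hlt
      · exact key k k' hlt
      · exact (key k' k hlt).symm
    -- independence of the C-events
    have hCindep : ∀ m, iIndepSet (C m) μ := by
      intro m
      refine block_iIndepSet U hmeas hindep (fun k => Finset.Ioc (2^k) (2^(k+1))) hTdisj
        (C m) (fun k => ?_)
      set M := ⨆ i ∈ ((Finset.Ioc (2^k) (2^(k+1)) : Finset ℕ) : Set ℕ),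
        MeasurableSpace.comap (U i) inferInstance with hM
      have hUi : ∀ i ∈ Finset.Ioc (2^k) (2^(k+1)), Measurable[M] (U i) := by
        intro i hi
        rw [measurable_iff_comap_le]
        exact le_iSup₂ (f := fun i (_ : i ∈ ((Finset.Ioc (2^k) (2^(k+1)) : Finset ℕ) : Set ℕ)) =>
          MeasurableSpace.comap (U i) inferInstance) i (Finset.mem_coe.2 hi)
      have hsumM : Measurable[M] (fun ω => ∑ i ∈ Finset.Ioc (2^k) (2^(k+1)), U i ω) :=
        Finset.measurable_sum _ hUi
      exact measurableSet_lt measurable_const hsumM.norm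
    -- summability of C-measures via second Borel-Cantelli (contrapositive)
    have hsumC : ∀ m, (∑' k, μ (C m k)) ≠ ⊤ := by
      intro m
      by_contra hinf
      have hone : μ (limsup (C m) atTop) = 1 :=
        measure_limsup_eq_one (fun k => hCmeas m k) (hCindep m) hinf
      have hzero : μ (limsup (C m) atTop) = 0 := by
        rw [measure_eq_zero_iff_ae_notMem]
        filter_upwards [h] with ω hω
        intro hmem
        rw [mem_limsup_iff_frequently_mem] at hmem
        have hev : ∀ᶠ k in atTop,
            ‖((2:ℝ)^k)⁻¹ • ∑ i ∈ Finset.Ioc (2^k) (2^(k+1)), U i ω‖ < (1/(m+1) : ℝ) :=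
          (tendsto_order.1 hω).2 _ (by positivity)
        have : ∀ᶠ k in atTop, ω ∉ C m k := by
          filter_upwards [hev] with k hk hCk
          rw [hCdef] at hCk
          simp only [Set.mem_setOf_eq] at hCk
          rw [norm_smul, norm_inv, norm_pow, Real.norm_ofNat] at hk
          have hpos := two_pow_pos' k
          rw [inv_mul_lt_iff₀ hpos] at hk
          nlinarith [hCk, hk]
        exact (not_frequently.2 this) hmem
      rw [hzero] at hone
      exact zero_ne_one hone
    -- Levy bound and first Borel-Cantelli
    have hBadle : ∀ m k, μ (Bad m k) ≤ 2 * μ (C m k) := by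
      intro m k
      have := levy_omega U hmeas hindep hsymm (2^k) (2^k)
        (t := (1/(m+1) : ℝ) * 2^k) (by positivity)
      rw [show 2^k + 2^k = 2^(k+1) by ring] at this
      exact this
    have hsumBad : ∀ m, (∑' k, μ (Bad m k)) ≠ ⊤ := by
      intro m
      have hle : ∑' k, μ (Bad m k) ≤ 2 * ∑' k, μ (C m k) := by
        rw [← ENNReal.tsum_mul_left]
        exact ENNReal.tsum_le_tsum (hBadle m)
      exact ne_top_of_le_ne_top (ENNReal.mul_ne_top (by norm_num) (hsumC m)) hle
    have hBadlim : ∀ m, μ (limsup (Bad m) atTop) = 0 :=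
      fun m => measure_limsup_atTop_eq_zero (hsumBad m)
    have hae : ∀ᵐ ω ∂μ, ∀ m : ℕ, ω ∉ limsup (Bad m) atTop :=
      ae_all_iff.2 fun m => measure_eq_zero_iff_ae_notMem.1 (hBadlim m)
    -- combine
    filter_upwards [h, hae] with ω hω hbad
    have hA : Tendsto (fun k : ℕ => ((2:ℝ)^k)⁻¹ • ∑ i ∈ Finset.Ioc (2^k) (2^(k+1)), U i ω)
        atTop (nhds 0) := tendsto_zero_iff_norm_tendsto_zero.2 hω
    have h1 := toeplitz_det (fun i => U i ω) hA
    have h2 : ∀ m : ℕ, ∀ᶠ k : ℕ in atTop, ∀ j ∈ Finset.Icc 1 (2^k),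
        ‖∑ i ∈ Finset.Ioc (2^k) (2^k + j), U i ω‖ ≤ (1/(m+1) : ℝ) * 2^k := by
      intro m
      have := hbad m
      rw [mem_limsup_iff_frequently_mem, not_frequently] at this
      filter_upwards [this] with k hk
      intro j hj
      by_contra hcon
      push_neg at hcon
      exact hk ⟨j, hj, hcon⟩
    exact tendsto_zero_iff_norm_tendsto_zero.1 (assemble_det (fun i => U i ω) h1 h2)
end

section
/- Let μ be a finite Borel measure on ℝ^d such that μ(∂H) = 0 for every closed half-space H. Then the map (x,u) ↦ μ(H_{x,u}) is continuous on ℝ^d × S^{d-1}, and consequently the half-space depth x ↦ D(x,μ) = inf_{u ∈ S^{d-1}} μ(H_{x,u}) is continuous and the infimum is attained for every x. -/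
open MeasureTheory

/-- The closed half-space in `ℝ^d` with boundary point `x` and outer normal `u`. -/
def halfSpace {d : ℕ} (x u : EuclideanSpace ℝ (Fin d)) : Set (EuclideanSpace ℝ (Fin d)) :=
  {y | (inner ℝ y u : ℝ) ≤ inner ℝ x u}

/-- The half-space (Tukey) depth of `x` with respect to a finite Borel measure `ν`. -/
noncomputable def halfSpaceDepth {d : ℕ} (x : EuclideanSpace ℝ (Fin d))
    (ν : Measure (EuclideanSpace ℝ (Fin d))) : ℝ :=
  ⨅ u : Metric.sphere (0 : EuclideanSpace ℝ (Fin d)) 1, (ν (halfSpace x u)).toReal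

lemma isClosed_halfSpace {d : ℕ} (x u : EuclideanSpace ℝ (Fin d)) :
    IsClosed (halfSpace x u) :=
  isClosed_le (continuous_id.inner continuous_const) continuous_const

/-- Infimum over a nonempty compact space is 1-Lipschitz on `C(K, ℝ)`. -/
lemma lipschitz_inf {K : Type*} [TopologicalSpace K] [CompactSpace K] [Nonempty K] :
    LipschitzWith 1 (fun g : C(K, ℝ) => ⨅ u, g u) := by
  refine LipschitzWith.of_dist_le_mul fun g h => ?_
  simp only [NNReal.coe_one, one_mul]
  rw [Real.dist_eq, abs_sub_le_iff]
  have key : ∀ g h : C(K, ℝ), (⨅ u, g u) - (⨅ u, h u) ≤ dist g h := by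
    intro g h
    have main : (⨅ u, g u) - dist g h ≤ ⨅ u, h u := by
      refine le_ciInf fun u => ?_
      have h1 : (⨅ u, g u) ≤ g u :=
        ciInf_le (IsCompact.bddBelow (isCompact_range g.continuous)) u
      have h2 : g u ≤ h u + dist g h := by
        have := ContinuousMap.dist_apply_le_dist (f := g) (g := h) u
        rw [Real.dist_eq, abs_sub_le_iff] at this
        linarith [this.1]
      linarith
    linarith
  exact ⟨key g h, dist_comm g h ▸ key h g⟩

set_option maxHeartbeats 1000000 in
theorem stmt_16 {d : ℕ} (hd : 0 < d) (μ : Measure (EuclideanSpace ℝ (Fin d)))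
    [IsFiniteMeasure μ]
    (hbd : ∀ (x : EuclideanSpace ℝ (Fin d))
      (u : Metric.sphere (0 : EuclideanSpace ℝ (Fin d)) 1),
      μ {y | (inner ℝ y (u : EuclideanSpace ℝ (Fin d)) : ℝ) = inner ℝ x (u : EuclideanSpace ℝ (Fin d))} = 0) :
    Continuous (fun p : EuclideanSpace ℝ (Fin d) ×
        Metric.sphere (0 : EuclideanSpace ℝ (Fin d)) 1 =>
        (μ (halfSpace p.1 p.2)).toReal) ∧
      Continuous (fun x : EuclideanSpace ℝ (Fin d) => halfSpaceDepth x μ) ∧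
      ∀ x : EuclideanSpace ℝ (Fin d),
        ∃ u : Metric.sphere (0 : EuclideanSpace ℝ (Fin d)) 1,
          halfSpaceDepth x μ = (μ (halfSpace x u)).toReal := by
  haveI : Nonempty (Fin d) := Fin.pos_iff_nonempty.mp hd
  haveI : Nonempty (Metric.sphere (0 : EuclideanSpace ℝ (Fin d)) 1) :=
    (NormedSpace.sphere_nonempty.mpr zero_le_one).to_subtype
  -- measurability
  have hmble : ∀ (x u : EuclideanSpace ℝ (Fin d)), MeasurableSet (halfSpace x u) :=
    fun x u => (isClosed_halfSpace x u).measurableSet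
  -- Key continuity:
  have hcont : Continuous (fun p : EuclideanSpace ℝ (Fin d) ×
      Metric.sphere (0 : EuclideanSpace ℝ (Fin d)) 1 =>
      (μ (halfSpace p.1 p.2)).toReal) := by
    rw [continuous_iff_continuousAt]
    intro p
    have key : Filter.Tendsto (fun q : EuclideanSpace ℝ (Fin d) ×
        Metric.sphere (0 : EuclideanSpace ℝ (Fin d)) 1 => μ (halfSpace q.1 q.2)) (nhds p)
        (nhds (μ (halfSpace p.1 p.2))) := by
      refine tendsto_measure_of_ae_tendsto_indicator_of_isFiniteMeasure (nhds p)
        (hmble _ _) (fun q => hmble _ _) ?_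
      have hne : ∀ᵐ y ∂μ, (inner ℝ y (p.2 : EuclideanSpace ℝ (Fin d)) : ℝ) ≠
          inner ℝ p.1 (p.2 : EuclideanSpace ℝ (Fin d)) := by
        have := hbd p.1 p.2
        rw [ae_iff]
        simpa using this
      filter_upwards [hne] with y hy
      -- the function q ↦ ⟨q.1, q.2⟩ - ⟨y, q.2⟩ is continuous and nonzero at p
      set g : EuclideanSpace ℝ (Fin d) ×
          Metric.sphere (0 : EuclideanSpace ℝ (Fin d)) 1 → ℝ :=
        fun q => (inner ℝ q.1 (q.2 : EuclideanSpace ℝ (Fin d)) : ℝ) -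
          inner ℝ y (q.2 : EuclideanSpace ℝ (Fin d)) with hg
      have hgc : Continuous g := by
        apply Continuous.sub
        · exact continuous_fst.inner (continuous_subtype_val.comp continuous_snd)
        · exact continuous_const.inner (continuous_subtype_val.comp continuous_snd)
      have hgp : g p ≠ 0 := sub_ne_zero.mpr (fun h => hy h.symm)
      rcases hgp.lt_or_gt with hlt | hgt
      · have : ∀ᶠ q in nhds p, g q < 0 :=
          Filter.Tendsto.eventually_lt_const hlt (hgc.tendsto p)
        filter_upwards [this] with q hq
        constructor
        · intro hmem
          exfalso
          have : (0:ℝ) ≤ g q := sub_nonneg.mpr hmem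
          linarith
        · intro hmem
          exfalso
          have : (0:ℝ) ≤ g p := sub_nonneg.mpr hmem
          linarith
      · have : ∀ᶠ q in nhds p, 0 < g q :=
          Filter.Tendsto.eventually_const_lt hgt (hgc.tendsto p)
        filter_upwards [this] with q hq
        constructor
        · intro _
          exact le_of_lt (sub_pos.mp hgt)
        · intro _
          exact le_of_lt (sub_pos.mp hq)
    exact (ENNReal.tendsto_toReal (measure_ne_top μ _)).comp key
  refine ⟨hcont, ?_, ?_⟩
  · -- continuity of the depth
    let F : C(EuclideanSpace ℝ (Fin d) ×
        Metric.sphere (0 : EuclideanSpace ℝ (Fin d)) 1, ℝ) := ⟨_, hcont⟩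
    have h2 : (fun x : EuclideanSpace ℝ (Fin d) => halfSpaceDepth x μ) =
        (fun g : C(Metric.sphere (0 : EuclideanSpace ℝ (Fin d)) 1, ℝ) => ⨅ u, g u) ∘
        (fun x => ContinuousMap.curry F x) := by
      funext x
      simp only [Function.comp_apply, ContinuousMap.curry_apply, halfSpaceDepth, F,
        ContinuousMap.coe_mk]
    rw [h2]
    exact lipschitz_inf.continuous.comp (ContinuousMap.curry F).continuous
  · -- attainment of the infimum
    intro x
    have hcx : Continuous (fun u : Metric.sphere (0 : EuclideanSpace ℝ (Fin d)) 1 =>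
        (μ (halfSpace x u)).toReal) := hcont.comp (Continuous.prodMk_right x)
    obtain ⟨u, -, hu⟩ := isCompact_univ.exists_isMinOn Set.univ_nonempty hcx.continuousOn
    refine ⟨u, le_antisymm (ciInf_le ?_ u) (le_ciInf fun v => hu (Set.mem_univ v))⟩
    exact ⟨0, fun r ⟨v, hv⟩ => hv ▸ ENNReal.toReal_nonneg⟩
end
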